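/- For every n ≥ 1 there is a bijection h from N_n to S_n such that, for every M ∈ N_n, Ascbottom(h(M)) = Lcr(M) and {a−1 : a ∈ adjAsc(h(M))} = {i−1 : i ∈ LRcr(M)} (equivalently, h maps left crossings to ascent bottoms and double crossings to short ascents). -/

import Mathlib

/-! ## Permutations of `{1,…,n}` encoded as functions `ℕ → ℕ` (zero outside `[1,n]`). -/

/-- `f` represents a permutation of `{1,…,n}` in one-line notation:
`f j` is the value in position `j` (for `1 ≤ j ≤ n`), and `f` is `0` elsewhere. -/
def IsPermOn (n : ℕ) (f : ℕ → ℕ) : Prop :=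
  Set.BijOn f (Set.Icc 1 n) (Set.Icc 1 n) ∧ ∀ i, i ∉ Set.Icc 1 n → f i = 0

/-- Ascent tops: values `f j` with `2 ≤ j ≤ n` and `f (j-1) < f j`. -/
def permAsc (n : ℕ) (f : ℕ → ℕ) : Set ℕ :=
  {v | ∃ j, 2 ≤ j ∧ j ≤ n ∧ f (j - 1) < f j ∧ v = f j}

/-- Short ascents (adjacencies): ascent tops with `f (j-1) + 1 = f j`. -/
def permAdjAsc (n : ℕ) (f : ℕ → ℕ) : Set ℕ :=
  {v | ∃ j, 2 ≤ j ∧ j ≤ n ∧ f (j - 1) + 1 = f j ∧ v = f j}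

/-- Occurrences of the pattern `P`: ascent tops `f j` such that the value
`f j - 1` occurs in a position greater than `j`. -/
def permP (n : ℕ) (f : ℕ → ℕ) : Set ℕ :=
  {v | ∃ j, 2 ≤ j ∧ j ≤ n ∧ f (j - 1) < f j ∧ v = f j ∧
    ∃ k, j < k ∧ k ≤ n ∧ f k = f j - 1}

/-- Occurrences of the pattern `Q`: ascent tops `f j` such that the value
`f j - 1` occurs in a position less than `j - 1`. -/
def permQ (n : ℕ) (f : ℕ → ℕ) : Set ℕ :=
  {v | ∃ j, 2 ≤ j ∧ j ≤ n ∧ f (j - 1) < f j ∧ v = f j ∧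
    ∃ k, 1 ≤ k ∧ k + 1 < j ∧ f k = f j - 1}

/-- Silly ascents: `(Asc(π) ∪ {π 1}) \ {n}`. -/
def permAscSilly (n : ℕ) (f : ℕ → ℕ) : Set ℕ :=
  (permAsc n f ∪ {f 1}) \ {n}

/-- Occurrences of the silly pattern `P`: silly ascents `a` such that the value
`a + 1` occurs to the left of the value `a`. -/
def permPSilly (n : ℕ) (f : ℕ → ℕ) : Set ℕ :=
  {a | a ∈ permAscSilly n f ∧ ∃ j k, 1 ≤ j ∧ j < k ∧ k ≤ n ∧ f j = a + 1 ∧ f k = a}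

/-- Occurrences of the silly pattern `Q`: silly ascents `a` such that the value
`a + 1` occurs to the right of the value `a`. -/
def permQSilly (n : ℕ) (f : ℕ → ℕ) : Set ℕ :=
  {a | a ∈ permAscSilly n f ∧ ∃ j k, 1 ≤ j ∧ j < k ∧ k ≤ n ∧ f j = a ∧ f k = a + 1}

/-- Right minima: values having no smaller value to their right. -/
def permRmin (n : ℕ) (f : ℕ → ℕ) : Set ℕ :=
  {v | ∃ j, 1 ≤ j ∧ j ≤ n ∧ v = f j ∧ ∀ k, j < k → k ≤ n → f j < f k}

/-- Right maxima: values having no larger value to their right. -/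
def permRmax (n : ℕ) (f : ℕ → ℕ) : Set ℕ :=
  {v | ∃ j, 1 ≤ j ∧ j ≤ n ∧ v = f j ∧ ∀ k, j < k → k ≤ n → f k < f j}

/-- The number of components of the finest decomposition of a permutation into
direct sums: the number of `k ∈ [1,n]` such that `f` maps `{1,…,k}` into itself. -/
noncomputable def permComp (n : ℕ) (f : ℕ → ℕ) : ℕ :=
  Set.ncard {k | 1 ≤ k ∧ k ≤ n ∧ ∀ i, 1 ≤ i → i ≤ k → f i ≤ k}

/-- The number of descents. -/
noncomputable def permDes (n : ℕ) (f : ℕ → ℕ) : ℕ :=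
  Set.ncard {j | 2 ≤ j ∧ j ≤ n ∧ f j < f (j - 1)}

/-- Ascent bottoms: values `f j` with `1 ≤ j < n` and `f j < f (j+1)`. -/
def permAscBottom (n : ℕ) (f : ℕ → ℕ) : Set ℕ :=
  {v | ∃ j, 1 ≤ j ∧ j + 1 ≤ n ∧ f j < f (j + 1) ∧ v = f j}

/-- Long ascent bottoms: values `f j` with `1 ≤ j < n` and `f j < f (j+1) - 1`. -/
def permAscBottomProper (n : ℕ) (f : ℕ → ℕ) : Set ℕ :=
  {v | ∃ j, 1 ≤ j ∧ j + 1 ≤ n ∧ f j + 1 < f (j + 1) ∧ v = f j}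

/-! ## Matchings on `{1,…,2n}`.

The arcs are indexed `1,…,n` in increasing order of their closers; `opener i`
and `closer i` are the endpoints of the `i`-th arc (and `0` outside `[1,n]`). -/

structure Matching (n : ℕ) where
  opener : ℕ → ℕ
  closer : ℕ → ℕ
  opener_lt_closer : ∀ i, 1 ≤ i → i ≤ n → opener i < closer i
  closer_mono : ∀ i j, 1 ≤ i → i < j → j ≤ n → closer i < closer j
  opener_mem : ∀ i, 1 ≤ i → i ≤ n → opener i ∈ Set.Icc 1 (2 * n)
  closer_mem : ∀ i, 1 ≤ i → i ≤ n → closer i ∈ Set.Icc 1 (2 * n)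
  opener_inj : ∀ i j, 1 ≤ i → i ≤ n → 1 ≤ j → j ≤ n → opener i = opener j → i = j
  opener_ne_closer : ∀ i j, 1 ≤ i → i ≤ n → 1 ≤ j → j ≤ n → opener i ≠ closer j
  cover : ∀ m ∈ Set.Icc 1 (2 * n), ∃ i, 1 ≤ i ∧ i ≤ n ∧ (opener i = m ∨ closer i = m)
  opener_eq_zero : ∀ i, i ∉ Set.Icc 1 n → opener i = 0
  closer_eq_zero : ∀ i, i ∉ Set.Icc 1 n → closer i = 0

namespace Matching

variable {n : ℕ}

/-- No left nesting: no pair of arcs `A, B` with `opener A = opener B + 1`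
and `closer A < closer B`. -/
def NoLeftNesting (M : Matching n) : Prop :=
  ∀ i j, 1 ≤ i → i ≤ n → 1 ≤ j → j ≤ n →
    ¬(M.opener i = M.opener j + 1 ∧ M.closer i < M.closer j)

/-- Right nestings, indexed by the arc with the larger closer. -/
def RneSet (M : Matching n) : Set ℕ :=
  {i | 2 ≤ i ∧ i ≤ n ∧ M.opener i < M.opener (i - 1) ∧ M.closer i = M.closer (i - 1) + 1}

/-- Right crossings, indexed by the arc with the larger closer. -/
def RcrSet (M : Matching n) : Set ℕ :=
  {i | 2 ≤ i ∧ i ≤ n ∧ M.opener (i - 1) < M.opener i ∧ M.opener i < M.closer (i - 1) ∧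
    M.closer i = M.closer (i - 1) + 1}

/-- Double crossings (both left and right crossings), indexed by the right arc. -/
def LRcrSet (M : Matching n) : Set ℕ :=
  {i | i ∈ M.RcrSet ∧ M.opener i = M.opener (i - 1) + 1}

/-- Right single crossings. -/
def RcrpSet (M : Matching n) : Set ℕ := M.RcrSet \ M.LRcrSet

/-- Right adjacencies, indexed by the arc with the larger closer. -/
def RadjSet (M : Matching n) : Set ℕ :=
  {i | 2 ≤ i ∧ i ≤ n ∧ M.closer i = M.closer (i - 1) + 1}

/-- Left crossings, indexed by the arc with the smaller opener. -/
def LcrSet (M : Matching n) : Set ℕ :=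
  {i | 1 ≤ i ∧ i ≤ n ∧ ∃ j, 1 ≤ j ∧ j ≤ n ∧ M.opener j = M.opener i + 1 ∧
    M.opener j < M.closer i ∧ M.closer i < M.closer j}

/-- `Min(M)`: arcs whose opener lies to the left of the first closer. -/
def MinSet (M : Matching n) : Set ℕ :=
  {i | 1 ≤ i ∧ i ≤ n ∧ M.opener i < M.closer 1}

/-- The number of components of the finest decomposition of `M` into direct sums:
the number of `k ∈ [1,n]` such that `{1,…,2k}` is a union of arcs. -/
noncomputable def comp (M : Matching n) : ℕ :=
  Set.ncard {k | 1 ≤ k ∧ k ≤ n ∧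
    ∀ i, 1 ≤ i → i ≤ n → (M.closer i ≤ 2 * k ∨ 2 * k < M.opener i)}

/-- `S` is the direct sum of `M` (size `n₁`) and `M'` (size `n₂`): the diagrams
side by side, the elements of `M'` shifted by `2 n₁`. -/
def IsDsum {n₁ n₂ m : ℕ} (M : Matching n₁) (M' : Matching n₂) (S : Matching m) : Prop :=
  m = n₁ + n₂ ∧
  (∀ i, 1 ≤ i → i ≤ n₁ → S.opener i = M.opener i ∧ S.closer i = M.closer i) ∧
  (∀ i, 1 ≤ i → i ≤ n₂ → S.opener (n₁ + i) = M'.opener i + 2 * n₁ ∧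
    S.closer (n₁ + i) = M'.closer i + 2 * n₁)

end Matching

/-! ## 0-1-fillings of partition shapes.

The shape has `len ≥ 1` columns; column `i` (for `1 ≤ i ≤ len`) has height
`shape i ≥ 1`, weakly increasing from left to right (and `shape i = 0` outside
`[1, len]`).  The dots are the cells holding a `1`. -/

structure Filling where
  len : ℕ
  shape : ℕ → ℕ
  dots : Set (ℕ × ℕ)
  len_pos : 1 ≤ len
  shape_pos : ∀ i, 1 ≤ i → i ≤ len → 1 ≤ shape i
  shape_mono : ∀ i j, 1 ≤ i → i ≤ j → j ≤ len → shape i ≤ shape j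
  shape_eq_zero : ∀ i, i ∉ Set.Icc 1 len → shape i = 0
  dots_mem : ∀ p ∈ dots, 1 ≤ p.1 ∧ p.1 ≤ len ∧ 1 ≤ p.2 ∧ p.2 ≤ shape p.1

namespace Filling

/-- The number of dots of a filling. -/
noncomputable def nDots (T : Filling) : ℕ := Set.ncard T.dots

/-- Every column contains exactly one dot. -/
def ColumnStrict (T : Filling) : Prop :=
  ∀ i, 1 ≤ i → i ≤ T.len → ∃! j, (i, j) ∈ T.dots

/-- Every column contains at least one dot. -/
def ColumnPositive (T : Filling) : Prop :=
  ∀ i, 1 ≤ i → i ≤ T.len → ∃ j, (i, j) ∈ T.dots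

/-- The length of row `j`: the number of columns of height at least `j`. -/
noncomputable def rowLen (T : Filling) (j : ℕ) : ℕ :=
  Set.ncard {i | 1 ≤ i ∧ i ≤ T.len ∧ j ≤ T.shape i}

/-- A shape is flat if its nonempty rows have pairwise distinct lengths. -/
def Flat (T : Filling) : Prop :=
  ∀ j j', 1 ≤ j → 1 ≤ j' → j ≠ j' → 1 ≤ T.rowLen j → 1 ≤ T.rowLen j' →
    T.rowLen j ≠ T.rowLen j'

/-- A staircase shape: `shape = (1, 2, …, len)`. -/
def Staircase (T : Filling) : Prop :=
  ∀ i, 1 ≤ i → i ≤ T.len → T.shape i = i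

/-- The lazy set `X(T)`: columns having the same height as their left neighbour. -/
def lazySet (T : Filling) : Set ℕ :=
  {i | 2 ≤ i ∧ i ≤ T.len ∧ T.shape (i - 1) = T.shape i}

/-- Descents of a column-strict filling: columns whose dot is strictly lower
than the dot of the previous column. -/
def DesSet (T : Filling) : Set ℕ :=
  {i | 2 ≤ i ∧ i ≤ T.len ∧ ∃ j j', (i - 1, j) ∈ T.dots ∧ (i, j') ∈ T.dots ∧ j' < j}

/-- Ascents of a column-strict filling. -/
def AscSet (T : Filling) : Set ℕ :=
  {i | 2 ≤ i ∧ i ≤ T.len ∧ ∃ j j', (i - 1, j) ∈ T.dots ∧ (i, j') ∈ T.dots ∧ j < j'}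

/-- Repetitions of a column-strict filling. -/
def RepSet (T : Filling) : Set ℕ :=
  {i | 2 ≤ i ∧ i ≤ T.len ∧ ∃ j, (i - 1, j) ∈ T.dots ∧ (i, j) ∈ T.dots}

/-- Columns with a dot in their topmost cell. -/
def MaxSet (T : Filling) : Set ℕ :=
  {i | 1 ≤ i ∧ i ≤ T.len ∧ (i, T.shape i) ∈ T.dots}

/-- Columns with a dot on the bottom row. -/
def MinSet (T : Filling) : Set ℕ :=
  {i | 1 ≤ i ∧ i ≤ T.len ∧ (i, 1) ∈ T.dots}

/-- For a column-strict filling: columns whose dot is strictly closer to the top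
of its column than is any dot strictly to the right. -/
def RmaxColSet (T : Filling) : Set ℕ :=
  {i | ∃ j, (i, j) ∈ T.dots ∧
    ∀ i' j', (i', j') ∈ T.dots → i < i' → T.shape i - j < T.shape i' - j'}

/-- `rmax(T)`: the number of dots strictly closer to the top of their column
than is any dot strictly to the right. -/
noncomputable def rmaxDots (T : Filling) : ℕ :=
  Set.ncard {p | p ∈ T.dots ∧
    ∀ q ∈ T.dots, p.1 < q.1 → T.shape p.1 - p.2 < T.shape q.1 - q.2}

/-- `lmin(T)`: the number of dots strictly to the left of any dot strictly below. -/
noncomputable def lminDots (T : Filling) : ℕ :=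
  Set.ncard {p | p ∈ T.dots ∧ ∀ q ∈ T.dots, q.2 < p.2 → p.1 < q.1}

/-- The number of components of the finest decomposition of `T` into direct sums:
the number of columns `k` after which the filling can be cut. -/
noncomputable def comp (T : Filling) : ℕ :=
  Set.ncard {k | 1 ≤ k ∧ k ≤ T.len ∧ (k = T.len ∨ T.shape k < T.shape (k + 1)) ∧
    ∀ p ∈ T.dots, k < p.1 → T.shape k < p.2}

/-- `S = T ⊕ T'`: `T'` is placed strictly to the north-east of `T`, the
rectangle below `T'` being filled with empty cells. -/
def IsDsum (T T' S : Filling) : Prop :=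
  S.len = T.len + T'.len ∧
  (∀ i, 1 ≤ i → i ≤ T.len → S.shape i = T.shape i) ∧
  (∀ i, 1 ≤ i → i ≤ T'.len → S.shape (T.len + i) = T.shape T.len + T'.shape i) ∧
  S.dots = T.dots ∪ (fun p : ℕ × ℕ => (p.1 + T.len, p.2 + T.shape T.len)) '' T'.dots

/-- A square shape. -/
def Square (T : Filling) : Prop :=
  ∀ i, 1 ≤ i → i ≤ T.len → T.shape i = T.len

/-- Enriched permutation filling: a positive filling of a square shape in which
a dot is the leftmost dot of its row iff it is the topmost dot of its column. -/
def Enriched (T : Filling) : Prop :=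
  T.Square ∧
  (∀ i, 1 ≤ i → i ≤ T.len → ∃ j, (i, j) ∈ T.dots) ∧
  (∀ j, 1 ≤ j → j ≤ T.len → ∃ i, (i, j) ∈ T.dots) ∧
  (∀ p ∈ T.dots,
    ((∀ q ∈ T.dots, q.2 = p.2 → p.1 ≤ q.1) ↔ (∀ q ∈ T.dots, q.1 = p.1 → q.2 ≤ p.2)))

/-- `S = R ⊞ R'`: boxed sum of enriched permutation fillings. -/
def IsBoxSum (R R' S : Filling) : Prop :=
  S.len = R.len + R'.len ∧
  (∀ i, 1 ≤ i → i ≤ S.len → S.shape i = S.len) ∧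
  S.dots = R.dots ∪ (fun p : ℕ × ℕ => (p.1 + R.len, p.2 + R.len)) '' R'.dots

/-- The number of components of the finest decomposition into boxed sums. -/
noncomputable def boxcomp (T : Filling) : ℕ :=
  Set.ncard {k | 1 ≤ k ∧ k ≤ T.len ∧
    ∀ p ∈ T.dots, (p.1 ≤ k ∧ p.2 ≤ k) ∨ (k < p.1 ∧ k < p.2)}

end Filling

/-! ## Barred permutations, hatted permutations and marked matchings. -/

/-- A barred permutation: a permutation of `{1,…,n}` together with a set of
barred ascent tops. -/
structure BarredPerm where
  n : ℕ
  toFun : ℕ → ℕ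
  X : Set ℕ
  n_pos : 1 ≤ n
  isPerm : IsPermOn n toFun
  X_subset : X ⊆ permAsc n toFun

/-- Direct sum of barred permutations. -/
def BarredPerm.IsDsum (B B' C : BarredPerm) : Prop :=
  C.n = B.n + B'.n ∧
  (∀ i, C.toFun i = if i ≤ B.n then B.toFun i
    else if i ≤ B.n + B'.n then B'.toFun (i - B.n) + B.n else 0) ∧
  C.X = B.X ∪ (fun a => a + B.n) '' B'.X

/-- A hatted permutation: a permutation of `{1,…,n}` together with a set of
hatted silly ascents. -/
structure HattedPerm where
  n : ℕ
  toFun : ℕ → ℕ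
  X : Set ℕ
  n_pos : 1 ≤ n
  isPerm : IsPermOn n toFun
  X_subset : X ⊆ permAscSilly n toFun

/-- Direct sum of hatted permutations. -/
def HattedPerm.IsDsum (B B' C : HattedPerm) : Prop :=
  C.n = B.n + B'.n ∧
  (∀ i, C.toFun i = if i ≤ B.n then B.toFun i
    else if i ≤ B.n + B'.n then B'.toFun (i - B.n) + B.n else 0) ∧
  C.X = B.X ∪ (fun a => a + B.n) '' B'.X

/-- A marked matching: a matching without left nestings together with a set of
marked right adjacencies. -/
structure MarkedMatching where
  n : ℕ
  n_pos : 1 ≤ n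
  M : Matching n
  noLeftNesting : M.NoLeftNesting
  X : Set ℕ
  X_subset : X ⊆ M.RadjSet

/-- Direct sum of marked matchings. -/
def MarkedMatching.IsDsum (A B C : MarkedMatching) : Prop :=
  Matching.IsDsum A.M B.M C.M ∧ C.X = A.X ∪ (fun a => a + A.n) '' B.X

/-!
A matching without left nestings is determined by its code `c`: arc `i` opens between the
closers of the arcs `c i - 1` and `c i`, and the arcs opening in one such gap are labelled from
left to right. The codes are exactly the sequences with `1 ≤ c i ≤ i`; the left crossings are
the positions whose code value recurs later, and the double crossings are the plateaus
`c j = c (j - 1)` at which `j` is not a value of `c`.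

Such sequences of length `N + 1` correspond to permutations of `{1,…,N + 1}` by induction on `N`.
Appending the value `j` to a sequence changes these two sets exactly as inserting `N + 1`
right after a suitable value `v` (or at the front, `v = 0`) changes the ascent bottoms and the
short ascents of a permutation, and `j ↦ v` can be chosen bijective: `v` is the last position
with value `j` when `j` is a value, `j - 1` when `j` is such a plateau, and otherwise any of the
remaining values, none of which changes anything.
-/

/-! ### Inserting the largest value into a permutation -/

namespace IsPermOn

variable {n : ℕ} {f : ℕ → ℕ}

theorem apply_mem (hf : IsPermOn n f) {i : ℕ} (hi : i ∈ Set.Icc 1 n) : f i ∈ Set.Icc 1 n :=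
  hf.1.mapsTo hi

theorem apply_zero (hf : IsPermOn n f) : f 0 = 0 :=
  hf.2 0 (by simp)

theorem apply_pos_iff (hf : IsPermOn n f) {p : ℕ} (hp : p ≤ n) : 0 < f p ↔ 0 < p := by
  rcases Nat.eq_zero_or_pos p with rfl | hp0
  · simp [hf.apply_zero]
  · have := hf.apply_mem ⟨hp0, hp⟩
    simp only [Set.mem_Icc] at this
    omega

theorem of_injOn (hmaps : Set.MapsTo f (Set.Icc 1 n) (Set.Icc 1 n))
    (hinj : Set.InjOn f (Set.Icc 1 n)) (hzero : ∀ i ∉ Set.Icc 1 n, f i = 0) : IsPermOn n f :=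
  ⟨((Set.finite_Icc 1 n).injOn_iff_bijOn_of_mapsTo hmaps).1 hinj, hzero⟩

theorem bijOn_Iic (hf : IsPermOn n f) : Set.BijOn f (Set.Iic n) (Set.Iic n) := by
  have hIic : Set.Iic n = insert 0 (Set.Icc 1 n) := by ext; simp; omega
  have := hf.1.insert (a := 0) (by rw [hf.apply_zero]; simp)
  rwa [hf.apply_zero, ← hIic] at this

end IsPermOn

def permStats (n : ℕ) (f : ℕ → ℕ) : Set ℕ × Set ℕ :=
  (permAscBottom n f, permAdjAsc n f)

/-- The change of `(ascent bottoms, short ascents)` when `N + 1` is inserted into a permutation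
of `{1,…,N}` right after the value `v`, or at the front when `v = 0`. -/
def insertStats (N v : ℕ) (S : Set ℕ × Set ℕ) : Set ℕ × Set ℕ :=
  (S.1 ∪ {w | 0 < v ∧ w = v}, S.2 \ {v + 1} ∪ {w | 0 < v ∧ v = N ∧ w = N + 1})

theorem mem_permAdjAsc_iff {n v : ℕ} {f : ℕ → ℕ} :
    v ∈ permAdjAsc n f ↔ ∃ q, 1 ≤ q ∧ q + 1 ≤ n ∧ f q + 1 = f (q + 1) ∧ v = f (q + 1) := by
  constructor
  · rintro ⟨j, hj2, hjn, hadj, rfl⟩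
    refine ⟨j - 1, by omega, by omega, ?_⟩
    rw [Nat.sub_add_cancel (by omega : 1 ≤ j)]
    exact ⟨hadj, rfl⟩
  · rintro ⟨q, hq1, hqn, hadj, rfl⟩
    exact ⟨q + 1, by omega, hqn, hadj, rfl⟩

/-- Inserts the value `N + 1` at position `p + 1`. -/
def insertAt (N : ℕ) (f : ℕ → ℕ) (p q : ℕ) : ℕ :=
  if q = p + 1 then N + 1 else f (if q ≤ p then q else q - 1)

def removeAt (g : ℕ → ℕ) (p q : ℕ) : ℕ :=
  g (if q ≤ p then q else q + 1)

section Insertion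

variable {N p : ℕ} {f g : ℕ → ℕ}

theorem insertAt_of_le {q : ℕ} (hq : q ≤ p) : insertAt N f p q = f q := by
  simp [insertAt, hq, show q ≠ p + 1 by omega]

theorem insertAt_succ : insertAt N f p (p + 1) = N + 1 :=
  if_pos rfl

theorem insertAt_of_lt {q : ℕ} (hq : p + 1 < q) : insertAt N f p q = f (q - 1) := by
  simp [insertAt, show q ≠ p + 1 by omega, show ¬ q ≤ p by omega]

theorem isPermOn_insertAt (hf : IsPermOn N f) (hp : p ≤ N) :
    IsPermOn (N + 1) (insertAt N f p) := by
  have hshift : ∀ q ∈ Set.Icc 1 (N + 1), q ≠ p + 1 →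
      (if q ≤ p then q else q - 1) ∈ Set.Icc 1 N := fun q hq hqp => by
    simp only [Set.mem_Icc] at hq ⊢; split_ifs <;> omega
  refine IsPermOn.of_injOn (fun q hq => ?_) (fun a ha b hb hab => ?_) (fun q hq => ?_)
  · by_cases hqp : q = p + 1
    · simp [insertAt, hqp]
    · have := hf.apply_mem (hshift q hq hqp)
      simp only [insertAt, if_neg hqp, Set.mem_Icc] at this ⊢
      omega
  · by_cases hap : a = p + 1 <;> by_cases hbp : b = p + 1
    · rw [hap, hbp]
    · have := hf.apply_mem (hshift b hb hbp)
      simp only [insertAt, hap, hbp, if_true, if_false, Set.mem_Icc] at hab this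
      omega
    · have := hf.apply_mem (hshift a ha hap)
      simp only [insertAt, hap, hbp, if_true, if_false, Set.mem_Icc] at hab this
      omega
    · simp only [insertAt, if_neg hap, if_neg hbp] at hab
      have := hf.1.injOn (hshift a ha hap) (hshift b hb hbp) hab
      simp only [Set.mem_Icc] at ha hb
      split_ifs at this <;> omega
  · simp only [Set.mem_Icc, not_and_or, not_le] at hq
    have hqp : q ≠ p + 1 := by omega
    simp only [insertAt, if_neg hqp]
    exact hf.2 _ (by simp only [Set.mem_Icc]; split_ifs <;> omega)

theorem isPermOn_removeAt (hg : IsPermOn (N + 1) g) (hp : p ≤ N) (hgp : g (p + 1) = N + 1) :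
    IsPermOn N (removeAt g p) := by
  have hskip : ∀ q ∈ Set.Icc 1 N, (if q ≤ p then q else q + 1) ∈ Set.Icc 1 (N + 1) := by
    intro q hq
    simp only [Set.mem_Icc] at hq ⊢
    split_ifs <;> omega
  refine IsPermOn.of_injOn (fun q hq => ?_) (fun a ha b hb hab => ?_) (fun q hq => ?_)
  · have hne : g (if q ≤ p then q else q + 1) ≠ g (p + 1) := fun h => by
      have := hg.1.injOn (hskip q hq) (by simp only [Set.mem_Icc]; omega) h
      simp only [Set.mem_Icc] at hq
      split_ifs at this <;> omega
    have := hg.apply_mem (hskip q hq)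
    simp only [removeAt, Set.mem_Icc] at this hne ⊢
    omega
  · have := hg.1.injOn (hskip a ha) (hskip b hb) hab
    split_ifs at this <;> omega
  · simp only [Set.mem_Icc, not_and_or, not_le] at hq
    exact hg.2 _ (by simp only [Set.mem_Icc]; split_ifs <;> omega)

theorem removeAt_insertAt : removeAt (insertAt N f p) p = f := by
  funext q
  by_cases hq : q ≤ p
  · rw [removeAt, if_pos hq, insertAt_of_le hq]
  · rw [removeAt, if_neg hq, insertAt_of_lt (by omega), Nat.add_sub_cancel]

theorem insertAt_removeAt (hgp : g (p + 1) = N + 1) : insertAt N (removeAt g p) p = g := by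
  funext q
  rcases lt_trichotomy q (p + 1) with hq | rfl | hq
  · rw [insertAt_of_le (by omega), removeAt, if_pos (by omega)]
  · rw [insertAt_succ, hgp]
  · rw [insertAt_of_lt hq, removeAt, if_neg (by omega), Nat.sub_add_cancel (by omega)]

/-- One less than the position of the value `N + 1` in `g`. -/
noncomputable def maxPred (N : ℕ) (g : ℕ → ℕ) : ℕ :=
  Function.invFunOn g (Set.Icc 1 (N + 1)) (N + 1) - 1

theorem maxPred_spec (hg : IsPermOn (N + 1) g) :
    maxPred N g ≤ N ∧ g (maxPred N g + 1) = N + 1 := by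
  have hex : ∃ q ∈ Set.Icc 1 (N + 1), g q = N + 1 := hg.1.surjOn (by simp)
  have hmem := Function.invFunOn_mem hex
  have heq := Function.invFunOn_eq hex
  simp only [Set.mem_Icc] at hmem
  refine ⟨by unfold maxPred; omega, ?_⟩
  rwa [maxPred, Nat.sub_add_cancel hmem.1]

theorem maxPred_insertAt (hf : IsPermOn N f) (hp : p ≤ N) : maxPred N (insertAt N f p) = p := by
  have hinv := (isPermOn_insertAt hf hp).1.injOn.leftInvOn_invFunOn
    (show p + 1 ∈ Set.Icc 1 (N + 1) by simp only [Set.mem_Icc]; omega)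
  rw [insertAt_succ] at hinv
  rw [maxPred, hinv, Nat.add_sub_cancel]

theorem exists_adjacent_insertAt_iff (hp : p ≤ N) (P : ℕ → ℕ → Prop) :
    (∃ q, 1 ≤ q ∧ q + 1 ≤ N + 1 ∧ P (insertAt N f p q) (insertAt N f p (q + 1))) ↔
      (∃ q, 1 ≤ q ∧ q + 1 ≤ N ∧ q ≠ p ∧ P (f q) (f (q + 1))) ∨ (0 < p ∧ P (f p) (N + 1)) ∨
        (p < N ∧ P (N + 1) (f (p + 1))) := by
  constructor
  · rintro ⟨q, hq1, hqN, hP⟩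
    rcases lt_trichotomy q p with hqp | rfl | hqp
    · rw [insertAt_of_le hqp.le, insertAt_of_le hqp] at hP
      exact Or.inl ⟨q, hq1, by omega, hqp.ne, hP⟩
    · rw [insertAt_of_le le_rfl, insertAt_succ] at hP
      exact Or.inr (Or.inl ⟨hq1, hP⟩)
    rcases Nat.eq_or_lt_of_le (Nat.succ_le_of_lt hqp) with rfl | hqp
    · rw [insertAt_succ, insertAt_of_lt (by omega), Nat.add_sub_cancel] at hP
      exact Or.inr (Or.inr ⟨by omega, hP⟩)
    · rw [insertAt_of_lt hqp, insertAt_of_lt (by omega), Nat.add_sub_cancel] at hP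
      refine Or.inl ⟨q - 1, by omega, by omega, by omega, ?_⟩
      rwa [Nat.sub_add_cancel (by omega : 1 ≤ q)]
  · rintro (⟨q, hq1, hqN, hqp, hP⟩ | ⟨hp0, hP⟩ | ⟨hpN, hP⟩)
    · rcases Nat.lt_or_gt_of_ne hqp with hqp | hqp
      · refine ⟨q, hq1, by omega, ?_⟩
        rwa [insertAt_of_le hqp.le, insertAt_of_le hqp]
      · refine ⟨q + 1, by omega, by omega, ?_⟩
        rwa [insertAt_of_lt (by omega), insertAt_of_lt (by omega), Nat.add_sub_cancel,
          Nat.add_sub_cancel]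
    · exact ⟨p, hp0, by omega, by rwa [insertAt_of_le le_rfl, insertAt_succ]⟩
    · refine ⟨p + 1, by omega, by omega, ?_⟩
      rwa [insertAt_succ, insertAt_of_lt (by omega), Nat.add_sub_cancel]

theorem permAscBottom_insertAt (hf : IsPermOn N f) (hp : p ≤ N) :
    permAscBottom (N + 1) (insertAt N f p) = permAscBottom N f ∪ {w | 0 < f p ∧ w = f p} := by
  have hpos := hf.apply_pos_iff hp
  ext v
  refine (exists_adjacent_insertAt_iff hp fun a b => a < b ∧ v = a).trans ?_
  simp only [permAscBottom, hpos, Set.mem_union, Set.mem_ofPred_eq]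
  constructor
  · rintro (⟨q, hq1, hqN, -, hP⟩ | ⟨hp0, -, hv⟩ | ⟨hpN, hlt, -⟩)
    · exact Or.inl ⟨q, hq1, hqN, hP⟩
    · exact Or.inr ⟨hp0, hv⟩
    · have := hf.apply_mem (show p + 1 ∈ Set.Icc 1 N from ⟨by omega, hpN⟩)
      simp only [Set.mem_Icc] at this
      omega
  · rintro (⟨q, hq1, hqN, hP⟩ | ⟨hp0, hv⟩)
    · by_cases hqp : q = p
      · subst hqp
        have := hf.apply_mem (show q ∈ Set.Icc 1 N from ⟨hq1, by omega⟩)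
        simp only [Set.mem_Icc] at this
        exact Or.inr (Or.inl ⟨by omega, by omega, hP.2⟩)
      · exact Or.inl ⟨q, hq1, hqN, hqp, hP⟩
    · have := hf.apply_mem (show p ∈ Set.Icc 1 N from ⟨hp0, hp⟩)
      simp only [Set.mem_Icc] at this
      exact Or.inr (Or.inl ⟨hp0, by omega, hv⟩)

theorem permAdjAsc_insertAt (hf : IsPermOn N f) (hp : p ≤ N) :
    permAdjAsc (N + 1) (insertAt N f p) =
      permAdjAsc N f \ {f p + 1} ∪ {w | 0 < f p ∧ f p = N ∧ w = N + 1} := by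
  have hpos := hf.apply_pos_iff hp
  have hval : ∀ q ∈ Set.Icc 1 N, 1 ≤ f q ∧ f q ≤ N := fun q hq => hf.apply_mem hq
  ext v
  refine mem_permAdjAsc_iff.trans <|
    (exists_adjacent_insertAt_iff hp fun a b => a + 1 = b ∧ v = b).trans ?_
  simp only [mem_permAdjAsc_iff, hpos, Set.mem_union, Set.mem_sdiff, Set.mem_singleton_iff,
    Set.mem_ofPred_eq]
  constructor
  · rintro (⟨q, hq1, hqN, hqp, hadj, rfl⟩ | ⟨hp0, hadj, hv⟩ | ⟨hpN, hadj, -⟩)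
    · refine Or.inl ⟨⟨q, hq1, hqN, hadj, rfl⟩, fun h => hqp ?_⟩
      rcases Nat.eq_zero_or_pos p with rfl | hp0
      · have := hval q ⟨hq1, by omega⟩
        rw [hf.apply_zero] at h
        omega
      · exact hf.1.injOn ⟨hq1, by omega⟩ ⟨hp0, hp⟩ (by omega)
    · exact Or.inr ⟨hp0, by omega, hv⟩
    · have := hval (p + 1) ⟨by omega, hpN⟩
      omega
  · rintro (⟨⟨q, hq1, hqN, hadj, rfl⟩, hne⟩ | ⟨hp0, hpN, hv⟩)
    · refine Or.inl ⟨q, hq1, hqN, ?_, hadj, rfl⟩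
      rintro rfl
      exact hne hadj.symm
    · exact Or.inr (Or.inl ⟨hp0, by omega, hv⟩)

theorem permStats_insertAt (hf : IsPermOn N f) (hp : p ≤ N) :
    permStats (N + 1) (insertAt N f p) = insertStats N (f p) (permStats N f) :=
  Prod.ext (permAscBottom_insertAt hf hp) (permAdjAsc_insertAt hf hp)

end Insertion

noncomputable def permSuccEquiv (N : ℕ) :
    {f : ℕ → ℕ // IsPermOn N f} × Set.Iic N ≃ {g : ℕ → ℕ // IsPermOn (N + 1) g} where
  toFun x := ⟨insertAt N x.1 x.2, isPermOn_insertAt x.1.2 x.2.2⟩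
  invFun g := (⟨removeAt g (maxPred N g),
      isPermOn_removeAt g.2 (maxPred_spec g.2).1 (maxPred_spec g.2).2⟩,
    ⟨maxPred N g, (maxPred_spec g.2).1⟩)
  left_inv x := by
    obtain ⟨⟨f, hf⟩, p, hp⟩ := x
    have hmax := maxPred_insertAt hf hp
    ext <;> simp only [hmax, removeAt_insertAt]
  right_inv g := Subtype.ext (insertAt_removeAt (maxPred_spec g.2).2)

/-! ### Subexcedant sequences -/

def IsSubexcedant (n : ℕ) (s : ℕ → ℕ) : Prop :=
  (∀ i ∈ Set.Icc 1 n, s i ∈ Set.Icc 1 i) ∧ ∀ i ∉ Set.Icc 1 n, s i = 0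

def repeatedLater (n : ℕ) (s : ℕ → ℕ) : Set ℕ :=
  {i | 1 ≤ i ∧ ∃ m, i < m ∧ m ≤ n ∧ s m = s i}

def unhitPlateau (n : ℕ) (s : ℕ → ℕ) : Set ℕ :=
  {j | 2 ≤ j ∧ j ≤ n ∧ s j = s (j - 1) ∧ j ∉ s '' Set.Icc 1 n}

def codeStats (n : ℕ) (s : ℕ → ℕ) : Set ℕ × Set ℕ :=
  (repeatedLater n s, unhitPlateau n s)

section Subexcedant

variable {N j v : ℕ} {s t : ℕ → ℕ}

theorem IsSubexcedant.mem_Icc_of_mem_image (ht : IsSubexcedant N t)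
    (hv : v ∈ t '' Set.Icc 1 N) : v ∈ Set.Icc 1 N := by
  obtain ⟨m, hm, rfl⟩ := hv
  have := ht.1 m hm
  simp only [Set.mem_Icc] at this hm ⊢
  omega

theorem IsSubexcedant.update (ht : IsSubexcedant N t) (hj : j ∈ Set.Icc 1 (N + 1)) :
    IsSubexcedant (N + 1) (Function.update t (N + 1) j) := by
  refine ⟨fun i hi => ?_, fun i hi => ?_⟩
  · by_cases hiN : i = N + 1
    · subst hiN
      simpa using hj
    · rw [Function.update_of_ne hiN]
      exact ht.1 i (by simp only [Set.mem_Icc] at hi ⊢; omega)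
  · simp only [Set.mem_Icc] at hi
    rw [Function.update_of_ne (by omega)]
    exact ht.2 i (by simp only [Set.mem_Icc]; omega)

theorem IsSubexcedant.update_zero (hs : IsSubexcedant (N + 1) s) :
    IsSubexcedant N (Function.update s (N + 1) 0) := by
  refine ⟨fun i hi => ?_, fun i hi => ?_⟩
  · simp only [Set.mem_Icc] at hi
    rw [Function.update_of_ne (by omega)]
    exact hs.1 i (by simp only [Set.mem_Icc]; omega)
  · by_cases hiN : i = N + 1
    · simp [hiN]
    · rw [Function.update_of_ne hiN]
      exact hs.2 i (by simp only [Set.mem_Icc] at hi ⊢; omega)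

def subexcedantSuccEquiv (N : ℕ) :
    {t : ℕ → ℕ // IsSubexcedant N t} × Set.Icc 1 (N + 1) ≃
      {s : ℕ → ℕ // IsSubexcedant (N + 1) s} where
  toFun x := ⟨Function.update x.1 (N + 1) x.2, x.1.2.update x.2.2⟩
  invFun s :=
    (⟨Function.update s (N + 1) 0, IsSubexcedant.update_zero s.2⟩, ⟨s.1 (N + 1), s.2.1 _ (by simp)⟩)
  left_inv x := by
    obtain ⟨⟨t, ht⟩, j, hj⟩ := x
    have ht0 : t (N + 1) = 0 := ht.2 _ (by simp)
    ext <;> simp [Function.update_idem, ← ht0]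
  right_inv s := Subtype.ext (by simp [Function.update_idem])

theorem repeatedLater_update :
    repeatedLater (N + 1) (Function.update t (N + 1) j) =
      repeatedLater N t ∪ {i | i ∈ Set.Icc 1 N ∧ t i = j} := by
  ext i
  simp only [repeatedLater, Set.mem_union, Set.mem_ofPred_eq, Set.mem_Icc]
  constructor
  · rintro ⟨hi1, m, him, hmN, heq⟩
    rw [Function.update_of_ne (show i ≠ N + 1 by omega)] at heq
    by_cases hm : m = N + 1
    · rw [hm, Function.update_self] at heq
      exact Or.inr ⟨⟨hi1, by omega⟩, heq.symm⟩
    · rw [Function.update_of_ne hm] at heq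
      exact Or.inl ⟨hi1, m, him, by omega, heq⟩
  · rintro (⟨hi1, m, him, hmN, heq⟩ | ⟨⟨hi1, hiN⟩, rfl⟩)
    · refine ⟨hi1, m, him, by omega, ?_⟩
      rwa [Function.update_of_ne (show m ≠ N + 1 by omega),
        Function.update_of_ne (show i ≠ N + 1 by omega)]
    · refine ⟨hi1, N + 1, by omega, le_rfl, ?_⟩
      rw [Function.update_self, Function.update_of_ne (show i ≠ N + 1 by omega)]

theorem mem_image_update_iff :
    v ∈ Function.update t (N + 1) j '' Set.Icc 1 (N + 1) ↔ v = j ∨ v ∈ t '' Set.Icc 1 N := by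
  simp only [Set.mem_image, Set.mem_Icc, Function.update_apply]
  constructor
  · rintro ⟨m, hm, rfl⟩
    by_cases hmN : m = N + 1
    · exact Or.inl (if_pos hmN)
    · exact Or.inr ⟨m, ⟨hm.1, by omega⟩, (if_neg hmN).symm⟩
  · rintro (rfl | ⟨m, hm, rfl⟩)
    · exact ⟨N + 1, ⟨by omega, le_rfl⟩, if_pos rfl⟩
    · exact ⟨m, ⟨hm.1, by omega⟩, if_neg (by omega)⟩

theorem unhitPlateau_update (ht : IsSubexcedant N t) (hj : 1 ≤ j) :
    unhitPlateau (N + 1) (Function.update t (N + 1) j) =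
      unhitPlateau N t \ {j} ∪ {w | t N = j ∧ w = N + 1} := by
  ext w
  simp only [unhitPlateau, Set.mem_union, Set.mem_sdiff, Set.mem_singleton_iff,
    Set.mem_ofPred_eq, mem_image_update_iff, not_or]
  rcases Nat.lt_or_ge w (N + 1) with hw | hw
  · simp only [Function.update_of_ne (show w ≠ N + 1 by omega),
      Function.update_of_ne (show w - 1 ≠ N + 1 by omega)]
    constructor
    · rintro ⟨hw2, -, heq, hwj, hwt⟩
      exact Or.inl ⟨⟨hw2, by omega, heq, hwt⟩, hwj⟩
    · rintro (⟨⟨hw2, -, heq, hwt⟩, hwj⟩ | ⟨-, rfl⟩)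
      · exact ⟨hw2, by omega, heq, hwj, hwt⟩
      · omega
  · have hN1 : N + 1 ∉ t '' Set.Icc 1 N := fun h => by
      have := (ht.mem_Icc_of_mem_image h).2
      omega
    constructor
    · rintro ⟨hw2, hwN, heq, -, -⟩
      obtain rfl : w = N + 1 := by omega
      simp only [Function.update_self, show N + 1 - 1 = N by omega,
        Function.update_of_ne (show N ≠ N + 1 by omega)] at heq
      exact Or.inr ⟨heq.symm, rfl⟩
    · rintro (⟨⟨-, hwN, -⟩, -⟩ | ⟨htN, rfl⟩)
      · omega
      · have hN : 1 ≤ N := by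
          by_contra h0
          rw [show N = 0 by omega, ht.2 0 (by simp)] at htN
          omega
        have := ht.1 N ⟨hN, le_rfl⟩
        simp only [Set.mem_Icc] at this
        refine ⟨by omega, le_rfl, ?_, by omega, hN1⟩
        simp [htN]

def lastPos (N : ℕ) (t : ℕ → ℕ) (j : ℕ) : ℕ :=
  Nat.findGreatest (fun m => t m = j) N

theorem lastPos_spec (hj : j ∈ t '' Set.Icc 1 N) :
    lastPos N t j ∈ Set.Icc 1 N ∧ t (lastPos N t j) = j ∧ lastPos N t j ∉ repeatedLater N t := by
  obtain ⟨m, hm, rfl⟩ := hj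
  have hspec : t (lastPos N t (t m)) = t m :=
    Nat.findGreatest_spec (P := fun k => t k = t m) hm.2 rfl
  have hle : m ≤ lastPos N t (t m) := Nat.le_findGreatest hm.2 rfl
  refine ⟨⟨by simp only [Set.mem_Icc] at hm; omega, Nat.findGreatest_le N⟩, hspec, ?_⟩
  rintro ⟨-, m', hlt, hm'N, heq⟩
  have := Nat.le_findGreatest (P := fun k => t k = t m) hm'N (heq.trans hspec)
  exact absurd hlt (not_lt.2 this)

theorem lastPos_apply (hv : v ∈ Set.Icc 1 N) (hv' : v ∉ repeatedLater N t) :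
    lastPos N t (t v) = v := by
  have hle : v ≤ lastPos N t (t v) := Nat.le_findGreatest hv.2 rfl
  by_contra hne
  exact hv' ⟨hv.1, _, lt_of_le_of_ne hle (Ne.symm hne), Nat.findGreatest_le N,
    Nat.findGreatest_spec (P := fun k => t k = t v) hv.2 rfl⟩

theorem notMem_repeatedLater_self : N ∉ repeatedLater N t := by
  rintro ⟨-, m, hlt, hle, -⟩
  omega

theorem pred_mem_repeatedLater (hj : j ∈ unhitPlateau N t) : j - 1 ∈ repeatedLater N t := by
  obtain ⟨hj2, hjN, hplateau, -⟩ := hj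
  exact ⟨by omega, j, by omega, hjN, hplateau⟩

theorem codeStats_update_of_mem_image (ht : IsSubexcedant N t) (hj : j ∈ t '' Set.Icc 1 N) :
    codeStats (N + 1) (Function.update t (N + 1) j) =
      insertStats N (lastPos N t j) (codeStats N t) := by
  obtain ⟨hv, htv, hvR⟩ := lastPos_spec hj
  set v := lastPos N t j
  have hvB : v + 1 ∉ unhitPlateau N t := fun h => hvR ⟨hv.1, v + 1, by omega, h.2.1, h.2.2.1⟩
  have hjB : j ∉ unhitPlateau N t := fun h => h.2.2.2 hj
  refine Prod.ext ?_ ?_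
  · ext i
    simp only [codeStats, insertStats, repeatedLater_update, Set.mem_union, Set.mem_ofPred_eq]
    constructor
    · rintro (hi | ⟨hi, rfl⟩)
      · exact Or.inl hi
      · by_cases hiR : i ∈ repeatedLater N t
        · exact Or.inl hiR
        · exact Or.inr ⟨hv.1, (lastPos_apply hi hiR).symm⟩
    · rintro (hi | ⟨-, rfl⟩)
      · exact Or.inl hi
      · exact Or.inr ⟨hv, htv⟩
  · have hvN : t N = j ↔ v = N := by
      constructor
      · intro htN
        have := Nat.le_findGreatest (P := fun k => t k = j) le_rfl htN
        exact le_antisymm hv.2 this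
      · rintro hvN
        rwa [← hvN]
    simp only [codeStats, insertStats, unhitPlateau_update ht (ht.mem_Icc_of_mem_image hj).1,
      Set.sdiff_singleton_eq_self hjB, Set.sdiff_singleton_eq_self hvB, hvN,
      show 0 < v from hv.1, true_and]

theorem codeStats_update_of_mem_unhitPlateau (ht : IsSubexcedant N t)
    (hj : j ∈ unhitPlateau N t) :
    codeStats (N + 1) (Function.update t (N + 1) j) = insertStats N (j - 1) (codeStats N t) := by
  have hjR := pred_mem_repeatedLater hj
  obtain ⟨hj2, hjN, -, hjA⟩ := hj
  refine Prod.ext ?_ ?_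
  · ext i
    simp only [codeStats, insertStats, repeatedLater_update, Set.mem_union, Set.mem_ofPred_eq]
    constructor
    · rintro (hi | ⟨hi, rfl⟩)
      · exact Or.inl hi
      · exact absurd ⟨i, hi, rfl⟩ hjA
    · rintro (hi | ⟨-, rfl⟩)
      · exact Or.inl hi
      · exact Or.inl hjR
  · have htN : t N ≠ j := fun h => hjA ⟨N, ⟨by omega, le_rfl⟩, h⟩
    simp only [codeStats, insertStats, unhitPlateau_update ht (by omega : 1 ≤ j), htN,
      Nat.sub_add_cancel (by omega : 1 ≤ j), show j - 1 ≠ N by omega, false_and, and_false]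

theorem codeStats_update_of_notMem (ht : IsSubexcedant N t) (hj : 1 ≤ j)
    (hjA : j ∉ t '' Set.Icc 1 N) (hjB : j ∉ unhitPlateau N t)
    (hv : 0 < v → v ∈ repeatedLater N t ∧ v + 1 ∉ unhitPlateau N t) :
    codeStats (N + 1) (Function.update t (N + 1) j) = insertStats N v (codeStats N t) := by
  refine Prod.ext ?_ ?_
  · ext i
    simp only [codeStats, insertStats, repeatedLater_update, Set.mem_union, Set.mem_ofPred_eq]
    constructor
    · rintro (hi | ⟨hi, rfl⟩)
      · exact Or.inl hi
      · exact absurd ⟨i, hi, rfl⟩ hjA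
    · rintro (hi | ⟨hv0, rfl⟩)
      · exact Or.inl hi
      · exact Or.inl (hv hv0).1
  · have htN : t N ≠ j := by
      intro h
      rcases Nat.eq_zero_or_pos N with hN | hN
      · rw [hN, ht.2 0 (by simp)] at h
        omega
      · exact hjA ⟨N, ⟨hN, le_rfl⟩, h⟩
    have hvB : v + 1 ∉ unhitPlateau N t := by
      rcases Nat.eq_zero_or_pos v with rfl | hv0
      · exact fun h => by have := h.1; omega
      · exact (hv hv0).2
    have hvN : ¬ (0 < v ∧ v = N) := by
      rintro ⟨hv0, rfl⟩
      exact notMem_repeatedLater_self (hv hv0).1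
    simp only [codeStats, insertStats, unhitPlateau_update ht hj, htN, false_and,
      Set.sdiff_singleton_eq_self hjB, Set.sdiff_singleton_eq_self hvB]
    congr 1
    ext w
    simp only [Set.mem_ofPred_eq, false_iff]
    exact fun h => hvN ⟨h.1, h.2.1⟩

open Classical in
/-- Right after which value `N + 1` is inserted when the value `j` is appended to `t`, if `j` is
a value of `t` or an unhit plateau of `t`. -/
noncomputable def insertValue (N : ℕ) (t : ℕ → ℕ) (j : ℕ) : ℕ :=
  if j ∈ t '' Set.Icc 1 N then lastPos N t j else j - 1

theorem insertValue_le (hj : j ∈ t '' Set.Icc 1 N ∪ unhitPlateau N t) : insertValue N t j ≤ N := by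
  rcases hj with hj | hj
  · rw [insertValue, if_pos hj]
    exact (lastPos_spec hj).1.2
  · rw [insertValue, if_neg hj.2.2.2]
    have := hj.2.1
    omega

theorem codeStats_update_of_mem_union (ht : IsSubexcedant N t)
    (hj : j ∈ t '' Set.Icc 1 N ∪ unhitPlateau N t) :
    codeStats (N + 1) (Function.update t (N + 1) j) =
      insertStats N (insertValue N t j) (codeStats N t) := by
  rcases hj with hj | hj
  · rw [insertValue, if_pos hj]
    exact codeStats_update_of_mem_image ht hj
  · rw [insertValue, if_neg hj.2.2.2]
    exact codeStats_update_of_mem_unhitPlateau ht hj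

theorem injOn_insertValue : Set.InjOn (insertValue N t) (t '' Set.Icc 1 N ∪ unhitPlateau N t) := by
  have hAB : ∀ a ∈ t '' Set.Icc 1 N, ∀ b ∈ unhitPlateau N t,
      insertValue N t a ≠ insertValue N t b := by
    intro a ha b hb hab
    rw [insertValue, if_pos ha, insertValue, if_neg hb.2.2.2] at hab
    exact (lastPos_spec ha).2.2 (hab ▸ pred_mem_repeatedLater hb)
  rintro a (ha | ha) b (hb | hb) hab
  · rw [insertValue, if_pos ha, insertValue, if_pos hb] at hab
    rw [← (lastPos_spec ha).2.1, ← (lastPos_spec hb).2.1, hab]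
  · exact absurd hab (hAB a ha b hb)
  · exact absurd hab.symm (hAB b hb a ha)
  · rw [insertValue, if_neg ha.2.2.2, insertValue, if_neg hb.2.2.2] at hab
    have := ha.1
    have := hb.1
    omega

/-- The values `v ≥ 1` at which inserting `N + 1` would change the statistics are all taken by
`insertValue`. -/
theorem exists_insertValue_eq (hv : v ∈ Set.Icc 1 N)
    (h : v ∉ repeatedLater N t ∨ v + 1 ∈ unhitPlateau N t) :
    ∃ j ∈ t '' Set.Icc 1 N ∪ unhitPlateau N t, insertValue N t j = v := by
  rcases h with h | h
  · have hA : t v ∈ t '' Set.Icc 1 N := ⟨v, hv, rfl⟩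
    exact ⟨t v, Or.inl hA, by rw [insertValue, if_pos hA, lastPos_apply hv h]⟩
  · exact ⟨v + 1, Or.inr h, by rw [insertValue, if_neg h.2.2.2, Nat.add_sub_cancel]⟩

theorem exists_equiv_extend {N : ℕ} {S : Set ℕ} {ν : ℕ → ℕ} (hmaps : ∀ j ∈ S, ν j ≤ N)
    (hinj : Set.InjOn ν S) :
    ∃ e : Set.Icc 1 (N + 1) ≃ Set.Iic N,
      ∀ j : Set.Icc 1 (N + 1), (j : ℕ) ∈ S → (e j : ℕ) = ν j := by
  obtain ⟨e, he⟩ := Set.MapsTo.exists_equiv_extend_of_card_eq (t := Finset.Iic N)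
    (s := {j : Set.Icc 1 (N + 1) | (j : ℕ) ∈ S}) (f := ν ∘ Subtype.val) (by simp)
    (fun j hj => by simpa using hmaps j hj) (fun a ha b hb hab => Subtype.ext (hinj ha hb hab))
  exact ⟨e.trans (Equiv.subtypeEquivRight (by simp)), fun j hj => he j hj⟩

theorem exists_insertEquiv (ht : IsSubexcedant N t) :
    ∃ e : Set.Icc 1 (N + 1) ≃ Set.Iic N, ∀ j : Set.Icc 1 (N + 1),
      codeStats (N + 1) (Function.update t (N + 1) j) = insertStats N (e j) (codeStats N t) := by
  obtain ⟨e, he⟩ := exists_equiv_extend (fun j hj => insertValue_le hj) injOn_insertValue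
  refine ⟨e, fun j => ?_⟩
  by_cases hj : (j : ℕ) ∈ t '' Set.Icc 1 N ∪ unhitPlateau N t
  · rw [he j hj]
    exact codeStats_update_of_mem_union ht hj
  obtain ⟨hjA, hjB⟩ := not_or.1 hj
  refine codeStats_update_of_notMem ht j.2.1 hjA hjB fun hv0 => ?_
  by_contra hv
  obtain ⟨k, hk, hkv⟩ := exists_insertValue_eq ⟨hv0, (e j).2⟩
    ((not_and_or.1 hv).imp id not_not.1)
  have hk' : k ∈ Set.Icc 1 N :=
    hk.elim ht.mem_Icc_of_mem_image fun h => ⟨by have := h.1; omega, h.2.1⟩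
  have : e ⟨k, hk'.1, by have := hk'.2; omega⟩ = e j := Subtype.ext ((he _ hk).trans hkv)
  exact hj (e.injective this ▸ hk)

end Subexcedant

theorem exists_subexcedantEquivPerm : ∀ n : ℕ, ∃ Φ : {s // IsSubexcedant n s} ≃ {f // IsPermOn n f},
    ∀ s, permStats n (Φ s) = codeStats n s
  | 0 => by
    have hzero : ∀ g : ℕ → ℕ, (∀ i ∉ Set.Icc 1 0, g i = 0) → g = 0 := fun g hg =>
      funext fun i => hg i (by simp)
    refine ⟨⟨fun _ => ⟨0, ⟨by simp, fun _ _ => rfl⟩⟩, fun _ => ⟨0, ⟨by simp, fun _ _ => rfl⟩⟩,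
      fun s => Subtype.ext (hzero s.1 s.2.2).symm, fun f => Subtype.ext (hzero f.1 f.2.2).symm⟩,
      fun s => ?_⟩
    refine Prod.ext ?_ ?_ <;> ext v <;>
      simp [permStats, codeStats, permAscBottom, permAdjAsc, repeatedLater, unhitPlateau]
    omega
  | N + 1 => by
    obtain ⟨Φ, hΦ⟩ := exists_subexcedantEquivPerm N
    choose e he using fun t : {t // IsSubexcedant N t} => exists_insertEquiv t.2
    refine ⟨(subexcedantSuccEquiv N).symm.trans ((Equiv.prodShear Φ fun t =>
      (e t).trans ((Φ t).2.bijOn_Iic.equiv _).symm).trans (permSuccEquiv N)), fun s => ?_⟩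
    obtain ⟨⟨t, j⟩, rfl⟩ := (subexcedantSuccEquiv N).surjective s
    set p := ((Φ t).2.bijOn_Iic.equiv _).symm (e t j)
    have hp : (Φ t).1 p = e t j :=
      congrArg Subtype.val (((Φ t).2.bijOn_Iic.equiv (Φ t).1).apply_symm_apply (e t j))
    rw [Equiv.trans_apply, Equiv.symm_apply_apply]
    change permStats (N + 1) (insertAt N (Φ t) p) = _
    calc permStats (N + 1) (insertAt N (Φ t) p)
        = insertStats N ((Φ t).1 p) (permStats N (Φ t)) := permStats_insertAt (Φ t).2 p.2
      _ = codeStats (N + 1) (Function.update t (N + 1) j) := by rw [hp, hΦ, he]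

/-! ### Matchings without left nestings and their codes -/

namespace Matching

variable {n : ℕ} (M : Matching n) {a i j m : ℕ}

theorem closer_zero : M.closer 0 = 0 :=
  M.closer_eq_zero 0 (by simp)

theorem closer_pos (hj : j ∈ Set.Icc 1 n) : 0 < M.closer j :=
  (M.closer_mem j hj.1 hj.2).1

theorem opener_pos (hi : i ∈ Set.Icc 1 n) : 0 < M.opener i :=
  (M.opener_mem i hi.1 hi.2).1

theorem closer_strictMonoOn : StrictMonoOn M.closer (Set.Iic n) := by
  intro a ha b hb hab
  rcases Nat.eq_zero_or_pos a with rfl | ha0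
  · rw [M.closer_zero]
    exact M.closer_pos ⟨by omega, hb⟩
  · exact M.closer_mono a b ha0 hab hb

theorem closer_le_closer {a b : ℕ} (hab : a ≤ b) (hb : b ≤ n) : M.closer a ≤ M.closer b :=
  M.closer_strictMonoOn.monotoneOn (show a ∈ Set.Iic n from hab.trans hb) hb hab

theorem lt_of_closer_lt_closer {a b : ℕ} (ha : a ≤ n) (h : M.closer a < M.closer b) : a < b :=
  lt_of_not_ge fun hba => (M.closer_le_closer hba ha).not_gt h

/-- The arc `i` opens between the closers of the arcs `code i - 1` and `code i`. -/
noncomputable def code (i : ℕ) : ℕ :=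
  if 1 ≤ i ∧ i ≤ n then sInf {k | M.opener i < M.closer k} else 0

theorem code_spec (hi : i ∈ Set.Icc 1 n) :
    M.code i ∈ Set.Icc 1 i ∧ M.closer (M.code i - 1) < M.opener i ∧
      M.opener i < M.closer (M.code i) := by
  let S : Set ℕ := {k | M.opener i < M.closer k}
  have hiS : i ∈ S := M.opener_lt_closer i hi.1 hi.2
  have hcode : M.code i = sInf S := if_pos hi
  have hmem : M.opener i < M.closer (M.code i) := hcode ▸ Nat.sInf_mem ⟨i, hiS⟩
  have hle : M.code i ≤ i := hcode ▸ Nat.sInf_le hiS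
  have hpos : 1 ≤ M.code i := by
    by_contra h
    rw [show M.code i = 0 by omega, M.closer_zero] at hmem
    omega
  have hpred : M.closer (M.code i - 1) ≤ M.opener i :=
    not_lt.1 (Nat.notMem_of_lt_sInf (s := S) (by omega))
  refine ⟨⟨hpos, hle⟩, lt_of_le_of_ne hpred fun h => ?_, hmem⟩
  rcases Nat.eq_zero_or_pos (M.code i - 1) with h0 | h0
  · rw [h0, M.closer_zero] at h
    exact absurd h (M.opener_pos hi).ne
  · exact M.opener_ne_closer i _ hi.1 hi.2 h0 (by have := hi.2; omega) h.symm

theorem code_eq_of_lt_of_lt (hi : i ∈ Set.Icc 1 n) (hj : j ≤ n)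
    (h₁ : M.closer (j - 1) < M.opener i) (h₂ : M.opener i < M.closer j) : M.code i = j := by
  obtain ⟨⟨-, hci⟩, hc₁, hc₂⟩ := M.code_spec hi
  have := M.lt_of_closer_lt_closer (by omega) (h₁.trans hc₂)
  have := M.lt_of_closer_lt_closer (by have := hi.2; omega) (hc₁.trans h₂)
  omega

theorem code_le_of_opener_lt_closer (hi : i ∈ Set.Icc 1 n) (h : M.opener i < M.closer j) :
    M.code i ≤ j := by
  obtain ⟨⟨-, hci⟩, hc₁, -⟩ := M.code_spec hi
  have := M.lt_of_closer_lt_closer (by have := hi.2; omega) (hc₁.trans h)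
  omega

theorem exists_opener_eq (hj : j ∈ Set.Icc 1 n) {x : ℕ} (h₁ : M.closer (j - 1) < x)
    (h₂ : x < M.closer j) : ∃ a ∈ Set.Icc 1 n, M.opener a = x ∧ M.code a = j := by
  have hx : x ∈ Set.Icc 1 (2 * n) := ⟨by omega, by have := (M.closer_mem j hj.1 hj.2).2; omega⟩
  obtain ⟨a, ha1, ha2, rfl | rfl⟩ := M.cover x hx
  · exact ⟨a, ⟨ha1, ha2⟩, rfl, M.code_eq_of_lt_of_lt ⟨ha1, ha2⟩ hj.2 h₁ h₂⟩
  · have := M.lt_of_closer_lt_closer (by have := hj.2; omega) h₁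
    have := M.lt_of_closer_lt_closer ha2 h₂
    omega

theorem opener_lt_opener_of_code_lt (ha : a ∈ Set.Icc 1 n) (hi : i ∈ Set.Icc 1 n)
    (h : M.code a < M.code i) : M.opener a < M.opener i := by
  obtain ⟨-, -, ha₂⟩ := M.code_spec ha
  obtain ⟨⟨-, hci⟩, hi₁, -⟩ := M.code_spec hi
  have := M.closer_le_closer (by omega : M.code a ≤ M.code i - 1) (by have := hi.2; omega)
  omega

/-- The positions `1, …, x` are the closers and openers not beyond `x`. -/
theorem card_closer_le_add_card_opener_le {x : ℕ} (hx : x ≤ 2 * n) :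
    ((Finset.Icc 1 n).filter fun k => M.closer k ≤ x).card +
      ((Finset.Icc 1 n).filter fun k => M.opener k ≤ x).card = x := by
  classical
  set C := (Finset.Icc 1 n).filter fun k => M.closer k ≤ x
  set O := (Finset.Icc 1 n).filter fun k => M.opener k ≤ x
  have hunion : C.image M.closer ∪ O.image M.opener = Finset.Icc 1 x := by
    ext y
    simp only [C, O, Finset.mem_union, Finset.mem_image, Finset.mem_filter, Finset.mem_Icc]
    constructor
    · rintro (⟨k, ⟨hk, hkx⟩, rfl⟩ | ⟨k, ⟨hk, hkx⟩, rfl⟩)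
      · exact ⟨(M.closer_mem k hk.1 hk.2).1, hkx⟩
      · exact ⟨(M.opener_mem k hk.1 hk.2).1, hkx⟩
    · rintro ⟨hy1, hyx⟩
      obtain ⟨k, hk1, hkn, rfl | rfl⟩ := M.cover y ⟨hy1, by omega⟩
      · exact Or.inr ⟨k, ⟨⟨hk1, hkn⟩, hyx⟩, rfl⟩
      · exact Or.inl ⟨k, ⟨⟨hk1, hkn⟩, hyx⟩, rfl⟩
  have hdisj : Disjoint (C.image M.closer) (O.image M.opener) := by
    simp only [Finset.disjoint_left, Finset.mem_image, C, O, Finset.mem_filter, Finset.mem_Icc]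
    rintro _ ⟨k, ⟨hk, -⟩, rfl⟩ ⟨l, ⟨hl, -⟩, hlk⟩
    exact M.opener_ne_closer l k hl.1 hl.2 hk.1 hk.2 hlk
  have hC : Set.InjOn M.closer C := M.closer_strictMonoOn.injOn.mono fun k hk => by
    simp only [C, Finset.coe_filter, Finset.mem_Icc, Set.mem_ofPred_eq] at hk
    exact hk.1.2
  have hO : Set.InjOn M.opener O := fun k hk l hl h => by
    simp only [O, Finset.coe_filter, Finset.mem_Icc, Set.mem_ofPred_eq] at hk hl
    exact M.opener_inj k l hk.1.1 hk.1.2 hl.1.1 hl.1.2 h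
  have := congrArg Finset.card hunion
  rwa [Finset.card_union_of_disjoint hdisj, Finset.card_image_of_injOn hC,
    Finset.card_image_of_injOn hO, Nat.card_Icc, Nat.add_sub_cancel] at this

theorem closer_eq (hj : j ∈ Set.Icc 1 n) :
    M.closer j = j + ((Finset.Icc 1 n).filter fun i => M.code i ≤ j).card := by
  have hcount := M.card_closer_le_add_card_opener_le (M.closer_mem j hj.1 hj.2).2
  have hC : ((Finset.Icc 1 n).filter fun k => M.closer k ≤ M.closer j) = Finset.Icc 1 j := by
    ext k
    simp only [Finset.mem_filter, Finset.mem_Icc]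
    constructor
    · rintro ⟨hk, hkj⟩
      exact ⟨hk.1, (M.closer_strictMonoOn.le_iff_le (show k ∈ Set.Iic n from hk.2)
        (show j ∈ Set.Iic n from hj.2)).1 hkj⟩
    · rintro ⟨hk1, hkj⟩
      exact ⟨⟨hk1, hkj.trans hj.2⟩, M.closer_le_closer hkj hj.2⟩
  have hO : ((Finset.Icc 1 n).filter fun i => M.opener i ≤ M.closer j) =
      (Finset.Icc 1 n).filter fun i => M.code i ≤ j := by
    refine Finset.filter_congr fun i hi => ?_
    rw [Finset.mem_Icc] at hi
    constructor
    · intro hle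
      exact M.code_le_of_opener_lt_closer hi
        (lt_of_le_of_ne hle (M.opener_ne_closer i j hi.1 hi.2 hj.1 hj.2))
    · intro hle
      obtain ⟨⟨hc1, -⟩, -, hc₂⟩ := M.code_spec hi
      exact hc₂.le.trans (M.closer_le_closer hle hj.2)
  rw [hC, hO, Nat.card_Icc, Nat.add_sub_cancel] at hcount
  omega

variable {M}

theorem NoLeftNesting.lt_of_opener_eq_succ (hM : M.NoLeftNesting) (ha : a ∈ Set.Icc 1 n)
    (hi : i ∈ Set.Icc 1 n) (h : M.opener i = M.opener a + 1) : a < i := by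
  have hne : a ≠ i := by
    rintro rfl
    omega
  have hcl : M.closer a < M.closer i := by
    refine lt_of_le_of_ne (not_lt.1 fun hlt => hM i a hi.1 hi.2 ha.1 ha.2 ⟨h, hlt⟩) fun heq => ?_
    exact hne (M.closer_strictMonoOn.injOn (show a ∈ Set.Iic n from ha.2)
      (show i ∈ Set.Iic n from hi.2) heq)
  exact M.lt_of_closer_lt_closer ha.2 hcl

/-- Walk from `opener i` back to `opener m` one position at a time: every position in between
opens an arc of the same code, and each step lowers the label by `lt_of_opener_eq_succ`. -/
theorem NoLeftNesting.lt_of_opener_lt (hM : M.NoLeftNesting) (hm : m ∈ Set.Icc 1 n)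
    (hi : i ∈ Set.Icc 1 n) (hcode : M.code m = M.code i) (h : M.opener m < M.opener i) :
    m < i := by
  obtain ⟨x, hx⟩ := Nat.exists_eq_add_of_lt h
  induction x generalizing i with
  | zero => exact hM.lt_of_opener_eq_succ hm hi hx
  | succ x ih =>
    obtain ⟨⟨hc1, hci⟩, hi₁, hi₂⟩ := M.code_spec hi
    obtain ⟨-, hm₁, -⟩ := M.code_spec hm
    rw [hcode] at hm₁
    obtain ⟨a, ha, hax, hac⟩ := M.exists_opener_eq (x := M.opener m + x + 1)
      ⟨hc1, by have := hi.2; omega⟩ (by omega) (by omega)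
    exact (ih ha (hcode.trans hac.symm) (by omega) hax).trans
      (hM.lt_of_opener_eq_succ ha hi (by omega))

theorem NoLeftNesting.opener_lt_opener_iff (hM : M.NoLeftNesting) (hm : m ∈ Set.Icc 1 n)
    (hi : i ∈ Set.Icc 1 n) (hcode : M.code m = M.code i) : M.opener m < M.opener i ↔ m < i := by
  refine ⟨hM.lt_of_opener_lt hm hi hcode, fun hmi => ?_⟩
  rcases lt_trichotomy (M.opener m) (M.opener i) with h | h | h
  · exact h
  · exact absurd (M.opener_inj m i hm.1 hm.2 hi.1 hi.2 h) hmi.ne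
  · exact absurd (hM.lt_of_opener_lt hi hm hcode.symm h) (by omega)

theorem NoLeftNesting.opener_eq (hM : M.NoLeftNesting) (hi : i ∈ Set.Icc 1 n) :
    M.opener i = M.code i - 1 + ((Finset.Icc 1 n).filter
      fun m => M.code m < M.code i ∨ M.code m = M.code i ∧ m ≤ i).card := by
  have hcount := M.card_closer_le_add_card_opener_le (M.opener_mem i hi.1 hi.2).2
  obtain ⟨⟨hc1, hci⟩, hi₁, hi₂⟩ := M.code_spec hi
  have hin := hi.2
  have hC : ((Finset.Icc 1 n).filter fun k => M.closer k ≤ M.opener i) =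
      Finset.Icc 1 (M.code i - 1) := by
    ext k
    simp only [Finset.mem_filter, Finset.mem_Icc]
    constructor
    · rintro ⟨hk, hki⟩
      have := M.lt_of_closer_lt_closer hk.2 (hki.trans_lt hi₂)
      exact ⟨hk.1, by omega⟩
    · rintro ⟨hk1, hkc⟩
      exact ⟨⟨hk1, by omega⟩, (M.closer_le_closer hkc (by omega)).trans hi₁.le⟩
  have hO : ((Finset.Icc 1 n).filter fun m => M.opener m ≤ M.opener i) =
      (Finset.Icc 1 n).filter fun m => M.code m < M.code i ∨ M.code m = M.code i ∧ m ≤ i := by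
    refine Finset.filter_congr fun m hm => ?_
    rw [Finset.mem_Icc] at hm
    rcases lt_trichotomy (M.code m) (M.code i) with hlt | heq | hlt
    · simp only [hlt, true_or, iff_true]
      exact (M.opener_lt_opener_of_code_lt hm hi hlt).le
    · simp only [heq, lt_irrefl, false_or, true_and]
      rw [le_iff_lt_or_eq, le_iff_lt_or_eq, hM.opener_lt_opener_iff hm hi heq]
      exact or_congr_right ⟨fun h => M.opener_inj m i hm.1 hm.2 hi.1 hi.2 h, fun h => h ▸ rfl⟩
    · have := M.opener_lt_opener_of_code_lt hi hm hlt
      simp only [not_le.2 this, false_iff, not_or]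
      omega
  rw [hC, hO, Nat.card_Icc, Nat.add_sub_cancel] at hcount
  omega

end Matching

/-- Where the closer of arc `j` must lie in the matching without left nestings with code `s`:
after `j - 1` closers and after the openers of the arcs `i` with `s i ≤ j`. -/
def closerOfCode (n : ℕ) (s : ℕ → ℕ) (j : ℕ) : ℕ :=
  if 1 ≤ j ∧ j ≤ n then j + ((Finset.Icc 1 n).filter fun i => s i ≤ j).card else 0

/-- Where the opener of arc `i` must lie in the matching without left nestings with code `s`:
after the closers `1, …, s i - 1` and after the openers of the arcs with a smaller code or
with the same code and a smaller label. -/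
def openerOfCode (n : ℕ) (s : ℕ → ℕ) (i : ℕ) : ℕ :=
  if 1 ≤ i ∧ i ≤ n then
    s i - 1 + ((Finset.Icc 1 n).filter fun m => s m < s i ∨ s m = s i ∧ m ≤ i).card
  else 0

section OfCode

variable {n : ℕ} {s : ℕ → ℕ} {i j : ℕ}

theorem closerOfCode_zero : closerOfCode n s 0 = 0 := by
  simp [closerOfCode]

theorem closerOfCode_of_mem (hj : j ∈ Set.Icc 1 n) :
    closerOfCode n s j = j + ((Finset.Icc 1 n).filter fun i => s i ≤ j).card :=
  if_pos hj

theorem openerOfCode_of_mem (hi : i ∈ Set.Icc 1 n) :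
    openerOfCode n s i =
      s i - 1 + ((Finset.Icc 1 n).filter fun m => s m < s i ∨ s m = s i ∧ m ≤ i).card :=
  if_pos hi

theorem closerOfCode_lt_closerOfCode (hi : 1 ≤ i) (hij : i < j) (hj : j ≤ n) :
    closerOfCode n s i < closerOfCode n s j := by
  rw [closerOfCode_of_mem ⟨hi, by omega⟩, closerOfCode_of_mem ⟨by omega, hj⟩]
  have : ((Finset.Icc 1 n).filter fun k => s k ≤ i).card ≤
      ((Finset.Icc 1 n).filter fun k => s k ≤ j).card :=
    Finset.card_le_card (Finset.monotone_filter_right _ fun k hk => by omega)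
  omega

theorem closerOfCode_strictMonoOn : StrictMonoOn (closerOfCode n s) (Set.Iic n) := by
  intro a ha b hb hab
  rcases Nat.eq_zero_or_pos a with rfl | ha0
  · rw [closerOfCode_zero]
    rw [closerOfCode_of_mem ⟨by omega, hb⟩]
    omega
  · exact closerOfCode_lt_closerOfCode ha0 hab hb

theorem closerOfCode_le_closerOfCode {a b : ℕ} (hab : a ≤ b) (hb : b ≤ n) :
    closerOfCode n s a ≤ closerOfCode n s b :=
  closerOfCode_strictMonoOn.monotoneOn (show a ∈ Set.Iic n from hab.trans hb) hb hab

theorem closerOfCode_injOn : Set.InjOn (closerOfCode n s) (Set.Icc 1 n) :=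
  closerOfCode_strictMonoOn.injOn.mono fun _ hk => hk.2

theorem closerOfCode_mem (hj : j ∈ Set.Icc 1 n) : closerOfCode n s j ∈ Set.Icc 1 (2 * n) := by
  rw [closerOfCode_of_mem hj, Set.mem_Icc]
  have := Finset.card_filter_le (Finset.Icc 1 n) fun i => s i ≤ j
  rw [Nat.card_Icc] at this
  have := hj.1
  have := hj.2
  omega

theorem openerOfCode_lt_openerOfCode (hi : 1 ≤ i) (hij : i < j) (hj : j ≤ n) (hfib : s i = s j) :
    openerOfCode n s i < openerOfCode n s j := by
  rw [openerOfCode_of_mem ⟨hi, by omega⟩, openerOfCode_of_mem ⟨by omega, hj⟩, hfib]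
  have : ((Finset.Icc 1 n).filter fun m => s m < s j ∨ s m = s j ∧ m ≤ i).card <
      ((Finset.Icc 1 n).filter fun m => s m < s j ∨ s m = s j ∧ m ≤ j).card := by
    refine Finset.card_lt_card ⟨Finset.monotone_filter_right _ fun k hk => by omega,
      fun hsub => ?_⟩
    have := (Finset.mem_filter.1 (hsub (by simp; omega : j ∈ (Finset.Icc 1 n).filter
      fun m => s m < s j ∨ s m = s j ∧ m ≤ j))).2
    omega
  omega

variable (hs : IsSubexcedant n s)
include hs

theorem openerOfCode_lt_closerOfCode (hi : i ∈ Set.Icc 1 n) :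
    openerOfCode n s i < closerOfCode n s (s i) := by
  obtain ⟨hsi1, hsi2⟩ := hs.1 i hi
  rw [openerOfCode_of_mem hi, closerOfCode_of_mem ⟨hsi1, hsi2.trans hi.2⟩]
  have : ((Finset.Icc 1 n).filter fun m => s m < s i ∨ s m = s i ∧ m ≤ i).card ≤
      ((Finset.Icc 1 n).filter fun m => s m ≤ s i).card :=
    Finset.card_le_card (Finset.monotone_filter_right _ fun k hk => by omega)
  omega

theorem closerOfCode_lt_openerOfCode (hi : i ∈ Set.Icc 1 n) :
    closerOfCode n s (s i - 1) < openerOfCode n s i := by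
  obtain ⟨hsi1, hsi2⟩ := hs.1 i hi
  have hself : i ∈ (Finset.Icc 1 n).filter fun m => s m < s i ∨ s m = s i ∧ m ≤ i := by
    simp [hi.1, hi.2]
  rcases Nat.lt_or_ge (s i) 2 with h | h
  · rw [show s i - 1 = 0 by omega, closerOfCode_zero]
    have := Finset.card_pos.2 ⟨i, hself⟩
    rw [openerOfCode_of_mem hi]
    omega
  · rw [openerOfCode_of_mem hi, closerOfCode_of_mem ⟨by omega, by have := hi.2; omega⟩]
    have : ((Finset.Icc 1 n).filter fun m => s m ≤ s i - 1).card <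
        ((Finset.Icc 1 n).filter fun m => s m < s i ∨ s m = s i ∧ m ≤ i).card := by
      refine Finset.card_lt_card ⟨Finset.monotone_filter_right _ fun k hk => by omega,
        fun hsub => ?_⟩
      have := (Finset.mem_filter.1 (hsub hself)).2
      omega
    omega

theorem openerOfCode_ne_closerOfCode (hi : i ∈ Set.Icc 1 n) (hj : j ≤ n) :
    openerOfCode n s i ≠ closerOfCode n s j := by
  obtain ⟨hsi1, hsi2⟩ := hs.1 i hi
  have hin := hi.2
  have h₁ := closerOfCode_lt_openerOfCode hs hi
  have h₂ := openerOfCode_lt_closerOfCode hs hi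
  rcases Nat.lt_or_ge j (s i) with h | h
  · have := closerOfCode_le_closerOfCode (n := n) (s := s) (a := j) (b := s i - 1)
      (by omega) (by omega)
    omega
  · have := closerOfCode_le_closerOfCode (n := n) (s := s) h hj
    omega

theorem openerOfCode_injOn : Set.InjOn (openerOfCode n s) (Set.Icc 1 n) := by
  intro i hi j hj h
  have hjn := hj.2
  have hin := hi.2
  rcases lt_trichotomy (s i) (s j) with hlt | heq | hlt
  · have := closerOfCode_le_closerOfCode (n := n) (s := s) (a := s i) (b := s j - 1) (by omega)
      (by have := (hs.1 j hj).2; omega)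
    have := openerOfCode_lt_closerOfCode hs hi
    have := closerOfCode_lt_openerOfCode hs hj
    omega
  · rcases lt_trichotomy i j with hij | rfl | hij
    · exact absurd h (openerOfCode_lt_openerOfCode hi.1 hij hj.2 heq).ne
    · rfl
    · exact absurd h.symm (openerOfCode_lt_openerOfCode hj.1 hij hi.2 heq.symm).ne
  · have := closerOfCode_le_closerOfCode (n := n) (s := s) (a := s j) (b := s i - 1) (by omega)
      (by have := (hs.1 i hi).2; omega)
    have := openerOfCode_lt_closerOfCode hs hj
    have := closerOfCode_lt_openerOfCode hs hi
    omega

theorem openerOfCode_mem (hi : i ∈ Set.Icc 1 n) : openerOfCode n s i ∈ Set.Icc 1 (2 * n) := by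
  obtain ⟨hsi1, hsi2⟩ := hs.1 i hi
  have h₁ := closerOfCode_lt_openerOfCode hs hi
  have h₂ := openerOfCode_lt_closerOfCode hs hi
  have := (closerOfCode_mem (s := s) ⟨hsi1, hsi2.trans hi.2⟩).2
  exact ⟨by omega, by omega⟩

/-- The `n` openers and `n` closers are distinct points of `{1,…,2n}`, hence fill it. -/
theorem exists_openerOfCode_or_closerOfCode_eq {x : ℕ} (hx : x ∈ Set.Icc 1 (2 * n)) :
    ∃ i, 1 ≤ i ∧ i ≤ n ∧ (openerOfCode n s i = x ∨ closerOfCode n s i = x) := by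
  classical
  set O := (Finset.Icc 1 n).image (openerOfCode n s)
  set C := (Finset.Icc 1 n).image (closerOfCode n s)
  have hsub : O ∪ C ⊆ Finset.Icc 1 (2 * n) := by
    simp only [O, C, Finset.union_subset_iff, Finset.image_subset_iff, Finset.mem_Icc]
    exact ⟨fun i hi => openerOfCode_mem hs hi, fun i hi => closerOfCode_mem hi⟩
  have hO : O.card = n := by
    rw [Finset.card_image_of_injOn (by simpa using openerOfCode_injOn hs), Nat.card_Icc,
      Nat.add_sub_cancel]
  have hC : C.card = n := by
    rw [Finset.card_image_of_injOn (by simpa using closerOfCode_injOn), Nat.card_Icc,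
      Nat.add_sub_cancel]
  have hdisj : Disjoint O C := by
    simp only [O, C, Finset.disjoint_left, Finset.mem_image, Finset.mem_Icc]
    rintro _ ⟨i, hi, rfl⟩ ⟨j, hj, hji⟩
    exact openerOfCode_ne_closerOfCode hs hi hj.2 hji.symm
  have heq : O ∪ C = Finset.Icc 1 (2 * n) := Finset.eq_of_subset_of_card_le hsub (by
    rw [Finset.card_union_of_disjoint hdisj, hO, hC, Nat.card_Icc]
    omega)
  have hxOC : x ∈ O ∪ C := heq ▸ Finset.mem_Icc.2 hx
  simp only [O, C, Finset.mem_union, Finset.mem_image, Finset.mem_Icc] at hxOC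
  obtain ⟨i, hi, hix⟩ | ⟨i, hi, hix⟩ := hxOC
  · exact ⟨i, hi.1, hi.2, Or.inl hix⟩
  · exact ⟨i, hi.1, hi.2, Or.inr hix⟩

end OfCode

namespace Matching

variable {n : ℕ} {M : Matching n} {s : ℕ → ℕ} {a i m : ℕ}

def ofCode (hs : IsSubexcedant n s) : Matching n where
  opener := openerOfCode n s
  closer := closerOfCode n s
  opener_lt_closer i h1 h2 := (openerOfCode_lt_closerOfCode hs ⟨h1, h2⟩).trans_le
    (closerOfCode_le_closerOfCode (hs.1 i ⟨h1, h2⟩).2 h2)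
  closer_mono _ _ h1 h h2 := closerOfCode_lt_closerOfCode h1 h h2
  opener_mem _ h1 h2 := openerOfCode_mem hs ⟨h1, h2⟩
  closer_mem _ h1 h2 := closerOfCode_mem ⟨h1, h2⟩
  opener_inj _ _ hi1 hi2 hj1 hj2 h := openerOfCode_injOn hs ⟨hi1, hi2⟩ ⟨hj1, hj2⟩ h
  opener_ne_closer _ _ hi1 hi2 _ hj2 := openerOfCode_ne_closerOfCode hs ⟨hi1, hi2⟩ hj2
  cover _ hx := exists_openerOfCode_or_closerOfCode_eq hs hx
  opener_eq_zero _ hi := if_neg hi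
  closer_eq_zero _ hj := if_neg hj

theorem isSubexcedant_code (M : Matching n) : IsSubexcedant n M.code :=
  ⟨fun _ hi => (M.code_spec hi).1, fun _ hi => if_neg hi⟩

theorem code_eq_of_opener_eq_succ (ha : a ∈ Set.Icc 1 n) (hi : i ∈ Set.Icc 1 n)
    (h : M.opener i = M.opener a + 1) : M.code i = M.code a := by
  obtain ⟨⟨hc1, hca⟩, ha₁, ha₂⟩ := M.code_spec ha
  have hne := M.opener_ne_closer i (M.code a) hi.1 hi.2 hc1 (by have := ha.2; omega)
  exact M.code_eq_of_lt_of_lt hi (by have := ha.2; omega) (by omega) (by omega)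

theorem noLeftNesting_of_opener_lt (h : ∀ a ∈ Set.Icc 1 n, ∀ i ∈ Set.Icc 1 n,
    M.code a = M.code i → a < i → M.opener a < M.opener i) : M.NoLeftNesting := by
  rintro i a hi1 hi2 ha1 ha2 ⟨hop, hcl⟩
  have := h i ⟨hi1, hi2⟩ a ⟨ha1, ha2⟩ (code_eq_of_opener_eq_succ ⟨ha1, ha2⟩ ⟨hi1, hi2⟩ hop)
    (M.lt_of_closer_lt_closer hi2 hcl)
  omega

theorem code_ofCode (hs : IsSubexcedant n s) : (ofCode hs).code = s := by
  funext i
  by_cases hi : i ∈ Set.Icc 1 n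
  · obtain ⟨hsi1, hsi2⟩ := hs.1 i hi
    exact (ofCode hs).code_eq_of_lt_of_lt hi (hsi2.trans hi.2)
      (closerOfCode_lt_openerOfCode hs hi) (openerOfCode_lt_closerOfCode hs hi)
  · exact (if_neg hi).trans (hs.2 i hi).symm

theorem noLeftNesting_ofCode (hs : IsSubexcedant n s) : (ofCode hs).NoLeftNesting :=
  noLeftNesting_of_opener_lt fun a ha _ hi hcode hai =>
    openerOfCode_lt_openerOfCode ha.1 hai hi.2 (by rwa [code_ofCode] at hcode)

theorem ext_of_opener_closer {M M' : Matching n} (ho : M.opener = M'.opener)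
    (hc : M.closer = M'.closer) : M = M' := by
  cases M
  cases M'
  simp only [mk.injEq]
  exact ⟨ho, hc⟩

theorem NoLeftNesting.ofCode_code (hM : M.NoLeftNesting) : ofCode M.isSubexcedant_code = M := by
  refine ext_of_opener_closer (funext fun i => ?_) (funext fun j => ?_)
  · by_cases hi : i ∈ Set.Icc 1 n
    · exact (openerOfCode_of_mem hi).trans (hM.opener_eq hi).symm
    · exact (if_neg hi).trans (M.opener_eq_zero i hi).symm
  · by_cases hj : j ∈ Set.Icc 1 n
    · exact (closerOfCode_of_mem hj).trans (M.closer_eq hj).symm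
    · exact (if_neg hj).trans (M.closer_eq_zero j hj).symm

noncomputable def codeEquiv (n : ℕ) :
    {M : Matching n // M.NoLeftNesting} ≃ {s : ℕ → ℕ // IsSubexcedant n s} where
  toFun M := ⟨M.1.code, M.1.isSubexcedant_code⟩
  invFun s := ⟨ofCode s.2, noLeftNesting_ofCode s.2⟩
  left_inv M := Subtype.ext M.2.ofCode_code
  right_inv s := Subtype.ext (code_ofCode s.2)

theorem NoLeftNesting.lcrSet_eq (hM : M.NoLeftNesting) : M.LcrSet = repeatedLater n M.code := by
  ext i
  constructor
  · rintro ⟨hi1, hin, j, hj1, hjn, hop, -, -⟩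
    have hcode := M.code_eq_of_opener_eq_succ ⟨hi1, hin⟩ ⟨hj1, hjn⟩ hop
    exact ⟨hi1, j, hM.lt_of_opener_eq_succ ⟨hi1, hin⟩ ⟨hj1, hjn⟩ hop, hjn, hcode⟩
  · rintro ⟨hi1, m, him, hmn, hcode⟩
    have hi : i ∈ Set.Icc 1 n := ⟨hi1, by omega⟩
    have hm : m ∈ Set.Icc 1 n := ⟨by omega, hmn⟩
    obtain ⟨⟨hc1, hci⟩, hi₁, hi₂⟩ := M.code_spec hi
    obtain ⟨-, -, hm₂⟩ := M.code_spec hm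
    have hopm := (hM.opener_lt_opener_iff hi hm hcode.symm).2 him
    rw [hcode] at hm₂
    obtain ⟨a, ha, hop, hac⟩ := M.exists_opener_eq (x := M.opener i + 1) ⟨hc1, by omega⟩
      (by omega) (by omega)
    have hia := hM.lt_of_opener_eq_succ hi ha hop
    refine ⟨hi1, hi.2, a, ha.1, ha.2, hop, ?_, M.closer_mono i a hi1 hia ha.2⟩
    have := (M.code_spec ha).2.2
    rw [hac] at this
    exact this.trans_le (M.closer_le_closer hci hi.2)

theorem NoLeftNesting.lrcrSet_eq (hM : M.NoLeftNesting) : M.LRcrSet = unhitPlateau n M.code := by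
  ext i
  constructor
  · rintro ⟨⟨hi2, hin, -, -, hcl⟩, hop⟩
    refine ⟨hi2, hin, M.code_eq_of_opener_eq_succ ⟨by omega, by omega⟩ ⟨by omega, hin⟩ hop, ?_⟩
    rintro ⟨m, hm, rfl⟩
    obtain ⟨-, hm₁, hm₂⟩ := M.code_spec hm
    omega
  · rintro ⟨hi2, hin, hcode, hnot⟩
    have hi : i ∈ Set.Icc 1 n := ⟨by omega, hin⟩
    have hi' : i - 1 ∈ Set.Icc 1 n := ⟨by omega, by omega⟩
    obtain ⟨⟨hc1, hci⟩, hi₁, hi₂⟩ := M.code_spec hi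
    obtain ⟨⟨-, hpi⟩, hp₁, hp₂⟩ := M.code_spec hi'
    rw [← hcode] at hpi hp₁ hp₂
    have hlt := (hM.opener_lt_opener_iff hi' hi hcode.symm).2 (by omega)
    -- The positions between `opener (i - 1)` and `opener i`, and between `closer (i - 1)` and
    -- `closer i`, would be openers of arcs that cannot exist.
    have hop : M.opener i = M.opener (i - 1) + 1 := by
      by_contra hne
      obtain ⟨a, ha, hax, hac⟩ := M.exists_opener_eq (x := M.opener (i - 1) + 1)
        ⟨hc1, by omega⟩ (by omega) (by omega)
      have := hM.lt_of_opener_lt hi' ha (hcode.symm.trans hac.symm) (by omega)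
      have := hM.lt_of_opener_lt ha hi (hac.trans rfl) (by omega)
      omega
    have hcl : M.closer i = M.closer (i - 1) + 1 := by
      have := M.closer_mono (i - 1) i (by omega) (by omega) hin
      by_contra hne
      obtain ⟨a, ha, -, hac⟩ := M.exists_opener_eq (x := M.closer (i - 1) + 1) hi
        (by omega) (by omega)
      exact hnot ⟨a, ha, hac⟩
    have := M.closer_le_closer (by omega : M.code i ≤ i - 1) (by omega)
    exact ⟨⟨hi2, hin, hlt, by omega, hcl⟩, hop⟩

end Matching

theorem matchings_to_perms_lcr_to_ascbottom_general (n : ℕ) :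
    ∃ h : {M : Matching n // M.NoLeftNesting} → {f : ℕ → ℕ // IsPermOn n f},
      Function.Bijective h ∧
      ∀ M : {M : Matching n // M.NoLeftNesting},
        permAscBottom n (h M).1 = M.1.LcrSet ∧
        (fun a => a - 1) '' permAdjAsc n (h M).1 =
          (fun i => i - 1) '' M.1.LRcrSet := by
  obtain ⟨Φ, hΦ⟩ := exists_subexcedantEquivPerm n
  refine ⟨(Matching.codeEquiv n).trans Φ, Equiv.bijective _, fun M => ?_⟩
  obtain ⟨hasc, hadj⟩ := Prod.ext_iff.1 (hΦ (Matching.codeEquiv n M))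
  exact ⟨hasc.trans M.2.lcrSet_eq.symm, by rw [M.2.lrcrSet_eq]; exact congrArg _ hadj⟩

/-- There is a bijection from matchings of size `n` without left
nestings to permutations of `{1,…,n}` mapping left crossings to ascent bottoms
and double crossings to short ascents. -/
theorem matchings_to_perms_lcr_to_ascbottom (n : ℕ) (hn : 1 ≤ n) :
    ∃ h : {M : Matching n // M.NoLeftNesting} → {f : ℕ → ℕ // IsPermOn n f},
      Function.Bijective h ∧
      ∀ M : {M : Matching n // M.NoLeftNesting},
        permAscBottom n (h M).1 = M.1.LcrSet ∧
        (fun a => a - 1) '' permAdjAsc n (h M).1 =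
          (fun i => i - 1) '' M.1.LRcrSet :=
  matchings_to_perms_lcr_to_ascbottom_general n
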